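/- Given a commutative ladder of abelian groups with exact rows B_i → C_i → D_i (vertical transition maps from level i+1 to i), if the inverse systems (B_i) and (C_i) are each a,b-injective and a,b-surjective for some a,b, then the induced sequence of inverse limits lim← B_i → lim← C_i → lim← D_i is exact. -/

import Mathlib

open CategoryTheory Opposite

/-- The transition map from level `j` to level `i` (for `i ≤ j`) of an inverse system of
abelian groups indexed by `ℕ`. -/
noncomputable def InvSys.trans (F : ℕᵒᵖ ⥤ AddCommGrpCat) {i j : ℕ} (h : i ≤ j) :
    F.obj (op j) → F.obj (op i) :=
  F.map (homOfLE h).op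

/-- `a,b`-injectivity of an inverse system of abelian groups. -/
def InvSys.IsInjective (F : ℕᵒᵖ ⥤ AddCommGrpCat) (a b : ℕ) : Prop :=
  ∀ c (_ : a ≤ c), ∀ x : F.obj (op (b + c)),
    InvSys.trans F (by omega : a ≤ b + c) x = 0 →
    InvSys.trans F (by omega : c ≤ b + c) x = 0

/-- `a,b`-surjectivity of an inverse system of abelian groups. -/
def InvSys.IsSurjective (F : ℕᵒᵖ ⥤ AddCommGrpCat) (a b : ℕ) : Prop :=
  ∀ c (_ : a ≤ c), ∀ x : F.obj (op c),
    (∃ y : F.obj (op (b + c)), InvSys.trans F (by omega : c ≤ b + c) y = x) →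
    ∀ d (_ : c ≤ d), ∃ z : F.obj (op d), InvSys.trans F (by omega : c ≤ d) z = x

/-- The inverse limit `lim← A_i` of an inverse sequence of abelian groups, realized as the
subgroup of the product consisting of compatible sequences. -/
noncomputable def InvSys.invLim (F : ℕᵒᵖ ⥤ AddCommGrpCat) :
    AddSubgroup (Π i : ℕ, F.obj (op i)) where
  carrier := {x | ∀ i : ℕ, F.map (homOfLE (Nat.le_succ i)).op (x (i + 1)) = x i}
  zero_mem' := by intro i; simp [map_zero]
  add_mem' := by intro x y hx hy i; simp [map_add, hx i, hy i]
  neg_mem' := by intro x hx i; simp [map_neg, hx i]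

/-- The homomorphism induced on inverse limits by a morphism of inverse systems. -/
noncomputable def InvSys.limMap {F G : ℕᵒᵖ ⥤ AddCommGrpCat} (η : F ⟶ G) :
    InvSys.invLim F →+ InvSys.invLim G where
  toFun x := ⟨fun i => η.app (op i) (x.1 i), by
    intro i
    have h := ConcreteCategory.congr_hom (η.naturality (homOfLE (Nat.le_succ i)).op) (x.1 (i + 1))
    simp only [comp_apply] at h
    rw [← h, x.2 i]⟩
  map_zero' := by
    ext i
    simp [map_zero]
  map_add' x y := by
    ext i
    simp [map_add]

/-!
Let `y ∈ lim← C` with `γ y = 0`. Exactness of the rows lifts each `y_i` to `B_i`, but the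
lifts need not be compatible; two lifts at the same level differ by an element of `ker β`.
The hypotheses on `B` and `C` make `ker β` itself `a,b`-surjective: an element of `ker β_c`
coming from `B_{b+c}` extends to `ker β_d` for every `d ≥ c` (surjectivity in `B` extends it
to `B_{b+d}`, and injectivity in `C` kills its image in `C_d`). Correcting each lift by such
an element makes a lift at level `b + (a + n + 1)` agree with the previous one at level
`a + n`, and the resulting sequence, restricted down, is a compatible lift of `y`.
-/

theorem Nat.exists_seq_of_exists_succ {T : ℕ → Sort*} (P : ∀ n, T n → Prop)
    (R : ∀ n, T n → T (n + 1) → Prop) (h0 : ∃ t, P 0 t)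
    (hsucc : ∀ n t, P n t → ∃ t', P (n + 1) t' ∧ R n t t') :
    ∃ f : ∀ n, T n, (∀ n, P n (f n)) ∧ ∀ n, R n (f n) (f (n + 1)) := by
  obtain ⟨t₀, ht₀⟩ := h0
  choose next hnext hR using hsucc
  let g : ∀ n, {t : T n // P n t} :=
    fun n => Nat.rec ⟨t₀, ht₀⟩ (fun n t => ⟨next n t.1 t.2, hnext n t.1 t.2⟩) n
  exact ⟨fun n => (g n).1, fun n => (g n).2, fun n => hR n (g n).1 (g n).2⟩

namespace InvSys

section Transition

variable {F G : ℕᵒᵖ ⥤ AddCommGrpCat}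

theorem trans_self (i : ℕ) (x : F.obj (op i)) : trans F le_rfl x = x := by
  simp [trans]

theorem trans_trans {i j k : ℕ} (hij : i ≤ j) (hjk : j ≤ k) (x : F.obj (op k)) :
    trans F hij (trans F hjk x) = trans F (hij.trans hjk) x := by
  simp only [trans, ← ConcreteCategory.comp_apply, ← F.map_comp]
  rfl

theorem trans_zero {i j : ℕ} (h : i ≤ j) : trans F h 0 = 0 :=
  map_zero _

theorem trans_sub {i j : ℕ} (h : i ≤ j) (x y : F.obj (op j)) :
    trans F h (x - y) = trans F h x - trans F h y :=
  map_sub _ x y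

theorem app_trans (η : F ⟶ G) {i j : ℕ} (h : i ≤ j) (x : F.obj (op j)) :
    η.app (op i) (trans F h x) = trans G h (η.app (op j) x) := by
  have hnat := ConcreteCategory.congr_hom (η.naturality (homOfLE h).op) x
  simp only [ConcreteCategory.comp_apply] at hnat
  exact hnat

theorem trans_of_mem_invLim {x : Π i : ℕ, F.obj (op i)} (hx : x ∈ invLim F) {i j : ℕ}
    (h : i ≤ j) : trans F h (x j) = x i := by
  induction j, h using Nat.le_induction with
  | base => exact trans_self i (x i)
  | succ j hij ih =>
    rw [← trans_trans hij (Nat.le_succ j), show trans F _ (x (j + 1)) = x j from hx j, ih]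

@[simp]
theorem limMap_coe_apply (η : F ⟶ G) (x : invLim F) (i : ℕ) :
    (limMap η x).1 i = η.app (op i) (x.1 i) :=
  rfl

end Transition

section Lifting

variable {B C : ℕᵒᵖ ⥤ AddCommGrpCat} (β : B ⟶ C) {a b : ℕ}

theorem exists_app_eq_zero_trans_eq (hBsurj : IsSurjective B a b) (hCinj : IsInjective C a b)
    {c : ℕ} (hc : a ≤ c) (x : B.obj (op c))
    (hx : ∃ s : B.obj (op (b + c)), trans B (by omega : c ≤ b + c) s = x)
    (hβx : β.app (op c) x = 0) {d : ℕ} (hd : c ≤ d) :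
    ∃ z : B.obj (op d), β.app (op d) z = 0 ∧ trans B hd z = x := by
  obtain ⟨w, hw⟩ := hBsurj c hc x hx (b + d) (by omega)
  have hβw : trans C (show d ≤ b + d by omega) (β.app (op (b + d)) w) = 0 := by
    apply hCinj d (hc.trans hd)
    rw [← trans_trans hc (show c ≤ b + d by omega), ← app_trans, hw, hβx, trans_zero]
  exact ⟨trans B (show d ≤ b + d by omega) w, by rw [app_trans, hβw],
    by rw [trans_trans, hw]⟩

theorem exists_lift_trans_eq (hBsurj : IsSurjective B a b) (hCinj : IsInjective C a b)
    {y : Π i : ℕ, C.obj (op i)} (hy : y ∈ invLim C) {c d : ℕ} (hc : a ≤ c) (hd : c ≤ d)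
    (t : B.obj (op (b + c))) (ht : β.app (op (b + c)) t = y (b + c))
    (hlift : ∃ w : B.obj (op (b + d)), β.app (op (b + d)) w = y (b + d)) :
    ∃ t' : B.obj (op (b + d)), β.app (op (b + d)) t' = y (b + d) ∧
      trans B (show c ≤ b + d by omega) t' = trans B (show c ≤ b + c by omega) t := by
  obtain ⟨w, hw⟩ := hlift
  set s := trans B (show b + c ≤ b + d by omega) w - t
  have hβs : β.app (op c) (trans B (show c ≤ b + c by omega) s) = 0 := by
    rw [app_trans, map_sub, app_trans, hw, ht, trans_of_mem_invLim hy, sub_self, trans_zero]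
  obtain ⟨z, hβz, hz⟩ := exists_app_eq_zero_trans_eq β hBsurj hCinj hc _ ⟨s, rfl⟩ hβs
    (show c ≤ b + d by omega)
  refine ⟨w - z, by rw [map_sub, hw, hβz, sub_zero], ?_⟩
  rw [trans_sub, hz, trans_sub, trans_trans, sub_sub_cancel]

theorem exists_limMap_eq_of_forall_exists (hBsurj : IsSurjective B a b)
    (hCinj : IsInjective C a b) (y : invLim C)
    (hlift : ∀ i, ∃ w : B.obj (op i), β.app (op i) w = y.1 i) :
    ∃ x : invLim B, limMap β x = y := by
  obtain ⟨v, hv, hvv⟩ := Nat.exists_seq_of_exists_succ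
    (T := fun n => B.obj (op (b + (a + n))))
    (fun n t => β.app _ t = y.1 (b + (a + n)))
    (fun n t t' => trans B (show a + n ≤ b + (a + (n + 1)) by omega) t' =
      trans B (show a + n ≤ b + (a + n) by omega) t)
    (hlift _)
    (fun n t ht => exists_lift_trans_eq β hBsurj hCinj y.2 (by omega) (by omega) t ht (hlift _))
  refine ⟨⟨fun i => trans B (show i ≤ b + (a + i) by omega) (v i), fun i => ?_⟩, ?_⟩
  · change trans B (Nat.le_succ i) _ = _
    rw [trans_trans, ← trans_trans (show i ≤ a + i by omega) (by omega), hvv i, trans_trans]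
  · ext i
    simp only [limMap_coe_apply]
    rw [app_trans, hv i, trans_of_mem_invLim y.2]

end Lifting

end InvSys

theorem invLim_exact_general
    (B C D : ℕᵒᵖ ⥤ AddCommGrpCat) (β : B ⟶ C) (γ : C ⟶ D)
    (hex : ∀ i : ℕ, Function.Exact (β.app (op i)) (γ.app (op i)))
    (a b : ℕ)
    (hBsurj : InvSys.IsSurjective B a b)
    (hCinj : InvSys.IsInjective C a b) :
    Function.Exact (InvSys.limMap β) (InvSys.limMap γ) := by
  intro y
  constructor
  · intro hy
    refine InvSys.exists_limMap_eq_of_forall_exists β hBsurj hCinj y fun i => (hex i _).mp ?_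
    simpa using congrArg (fun z : InvSys.invLim D => z.1 i) hy
  · rintro ⟨x, rfl⟩
    ext i
    exact (hex i).apply_apply_eq_zero (x.1 i)

/-- Given a commutative ladder of inverse systems of abelian groups with rows
`B_i → C_i → D_i` exact at `C_i`, if both `(B_i)` and `(C_i)` are `a,b`-injective and
`a,b`-surjective for some `a, b`, then the induced sequence of inverse limits
`lim← B_i → lim← C_i → lim← D_i` is exact. -/
theorem invLim_exact
    (B C D : ℕᵒᵖ ⥤ AddCommGrpCat) (β : B ⟶ C) (γ : C ⟶ D)
    (hex : ∀ i : ℕ, Function.Exact (β.app (op i)) (γ.app (op i)))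
    (a b : ℕ)
    (hBinj : InvSys.IsInjective B a b) (hBsurj : InvSys.IsSurjective B a b)
    (hCinj : InvSys.IsInjective C a b) (hCsurj : InvSys.IsSurjective C a b) :
    Function.Exact (InvSys.limMap β) (InvSys.limMap γ) :=
  invLim_exact_general B C D β γ hex a b hBsurj hCinj
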